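/- arXiv:2308.12505 — 3 statements merged into one kernel-verified Lean document; each statement's English description precedes it below -/
import Mathlib

section
/- Let f = h·conj(g) be a sense-preserving logharmonic mapping in 𝔻 with dilatation ω = g'h/(gh'), and let ψ be analytic with ψ' = h'g. Define the pre-Schwarzian derivatives P_f = h''/h' + g'/g − ω̄ω'/(1−|ω|²) and P_ψ = ψ''/ψ' and their norms ‖P‖ = sup_{z∈𝔻}(1−|z|²)|P(z)|. Then ‖P_f‖ is finite if and only if ‖P_ψ‖ is finite, and if finite, | ‖P_f‖ − ‖P_ψ‖ | ≤ 1. -/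
/-!
Since `ψ' = h'g`, the pre-Schwarzian `ψ''/ψ'` equals `h''/h' + g'/g`, so `P_f - P_ψ` is the single
term `-ω̄ω'/(1 - |ω|²)`. The Schwarz–Pick lemma for the self-map `ω` of the disk gives
`(1 - |z|²)|ω'(z)| ≤ 1 - |ω(z)|²`, hence `(1 - |z|²)|P_f(z) - P_ψ(z)| ≤ |ω(z)| < 1` at every point,
and the weighted moduli of `P_f` and `P_ψ` differ by at most `1` everywhere in the disk.
-/

open Complex Metric Set

/-- The open unit disk. -/
def unitDisk : Set ℂ := Metric.ball 0 1

/-- Pre-Schwarzian derivative of an analytic function. -/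
noncomputable def preSch (F : ℂ → ℂ) : ℂ → ℂ := fun z => deriv (deriv F) z / deriv F z

/-- Pre-Schwarzian derivative of the logharmonic mapping `f = h ⬝ conj g` with dilatation `ω`. -/
noncomputable def logPreSch (h g ω : ℂ → ℂ) : ℂ → ℂ := fun z =>
  deriv (deriv h) z / deriv h z + deriv g z / g z -
    (starRingEnd ℂ) (ω z) * deriv ω z / ((1 - ‖ω z‖ ^ 2 : ℝ) : ℂ)

/-- The set of values `(1 - |z|²)|P z|` for `z` in the unit disk; its supremum is the
pre-Schwarzian norm and its boundedness expresses finiteness of the norm. -/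
def normSet (P : ℂ → ℂ) : Set ℝ :=
  {r | ∃ z ∈ unitDisk, r = (1 - ‖z‖ ^ 2) * ‖P z‖}

open ComplexConjugate Topology

noncomputable def moebius (w z : ℂ) : ℂ := (z - w) / (1 - conj w * z)

lemma one_sub_conj_mul_self (a : ℂ) : 1 - conj a * a = ((1 - ‖a‖ ^ 2 : ℝ) : ℂ) := by
  rw [← normSq_eq_conj_mul_self, normSq_eq_norm_sq]; push_cast; ring

lemma one_sub_sq_pos_of_mem_ball {a : ℂ} (ha : a ∈ ball (0 : ℂ) 1) : 0 < 1 - ‖a‖ ^ 2 := by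
  have := mem_ball_zero_iff.mp ha
  nlinarith [norm_nonneg a]

lemma one_sub_conj_mul_ne_zero {w z : ℂ} (hw : ‖w‖ < 1) (hz : ‖z‖ < 1) :
    1 - conj w * z ≠ 0 := by
  have hlt : ‖conj w * z‖ < 1 := by
    rw [norm_mul, RCLike.norm_conj]
    nlinarith [norm_nonneg w, norm_nonneg z]
  intro h
  rw [← sub_eq_zero.mp h, norm_one] at hlt
  exact lt_irrefl _ hlt

lemma normSq_one_sub_conj_mul_sub_normSq_sub (w z : ℂ) :
    normSq (1 - conj w * z) - normSq (z - w) = (1 - normSq w) * (1 - normSq z) := by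
  simp only [normSq_apply, sub_re, sub_im, mul_re, mul_im, conj_re, conj_im, one_re, one_im]
  ring

lemma moebius_mapsTo_ball {w : ℂ} (hw : ‖w‖ < 1) :
    MapsTo (moebius w) (ball 0 1) (ball 0 1) := by
  intro z hz
  rw [mem_ball_zero_iff] at hz ⊢
  have hden : 0 < ‖1 - conj w * z‖ := norm_pos_iff.mpr (one_sub_conj_mul_ne_zero hw hz)
  rw [moebius, norm_div, div_lt_one hden, ← sq_lt_sq₀ (norm_nonneg _) hden.le,
    ← normSq_eq_norm_sq, ← normSq_eq_norm_sq, ← sub_pos,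
    normSq_one_sub_conj_mul_sub_normSq_sub, normSq_eq_norm_sq, normSq_eq_norm_sq]
  apply mul_pos <;> nlinarith [norm_nonneg w, norm_nonneg z]

lemma hasDerivAt_moebius {w z : ℂ} (hden : 1 - conj w * z ≠ 0) :
    HasDerivAt (moebius w) ((1 - conj w * w) / (1 - conj w * z) ^ 2) z := by
  have hnum : HasDerivAt (fun z : ℂ => z - w) 1 z := (hasDerivAt_id z).sub_const w
  have hden' : HasDerivAt (fun z : ℂ => 1 - conj w * z) (-conj w) z := by
    simpa using ((hasDerivAt_id z).const_mul (conj w)).const_sub 1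
  exact (hnum.div hden' hden).congr_deriv (by ring)

lemma differentiableOn_moebius {w : ℂ} (hw : ‖w‖ < 1) :
    DifferentiableOn ℂ (moebius w) (ball 0 1) := fun _ hz =>
  (hasDerivAt_moebius (one_sub_conj_mul_ne_zero hw (mem_ball_zero_iff.mp hz)))
    |>.differentiableAt.differentiableWithinAt

lemma hasDerivAt_moebius_self {w : ℂ} (hw : w ∈ ball (0 : ℂ) 1) :
    HasDerivAt (moebius w) (((1 - ‖w‖ ^ 2 : ℝ) : ℂ)⁻¹) w := by
  have hne : ((1 - ‖w‖ ^ 2 : ℝ) : ℂ) ≠ 0 := ofReal_ne_zero.mpr (one_sub_sq_pos_of_mem_ball hw).ne'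
  have hden : 1 - conj w * w ≠ 0 := one_sub_conj_mul_self w ▸ hne
  refine (hasDerivAt_moebius hden).congr_deriv ?_
  rw [one_sub_conj_mul_self]
  field_simp

lemma hasDerivAt_moebius_neg_zero (a : ℂ) :
    HasDerivAt (moebius (-a)) ((1 - ‖a‖ ^ 2 : ℝ) : ℂ) 0 := by
  simpa [one_sub_conj_mul_self] using hasDerivAt_moebius (w := -a) (z := 0) (by simp)

theorem norm_deriv_mul_one_sub_sq_le_of_mapsTo_ball {f : ℂ → ℂ}
    (hd : DifferentiableOn ℂ f (ball 0 1)) (hm : MapsTo f (ball 0 1) (ball 0 1))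
    {a : ℂ} (ha : a ∈ ball (0 : ℂ) 1) :
    ‖deriv f a‖ * (1 - ‖a‖ ^ 2) ≤ 1 - ‖f a‖ ^ 2 := by
  have hb := hm ha
  have hna : ‖-a‖ < 1 := by simpa using mem_ball_zero_iff.mp ha
  have hin : MapsTo (moebius (-a)) (ball 0 1) (ball 0 1) := moebius_mapsTo_ball hna
  -- `F` fixes `0`, so the Schwarz lemma bounds `F'(0)`, which is `f'(a)` rescaled by Möbius factors.
  set F : ℂ → ℂ := moebius (f a) ∘ f ∘ moebius (-a)
  have hFd : DifferentiableOn ℂ F (ball 0 1) :=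
    (differentiableOn_moebius (mem_ball_zero_iff.mp hb)).comp
      (hd.comp (differentiableOn_moebius hna) hin) (hm.comp hin)
  have hFm : MapsTo F (ball 0 1) (ball 0 1) :=
    (moebius_mapsTo_ball (mem_ball_zero_iff.mp hb)).comp (hm.comp hin)
  have hzero : moebius (-a) 0 = a := by simp [moebius]
  have hF0 : F 0 = 0 := by simp [F, moebius]
  have hfa : HasDerivAt f (deriv f a) a :=
    (hd.differentiableAt (isOpen_ball.mem_nhds ha)).hasDerivAt
  have hF' : HasDerivAt F
      (((1 - ‖f a‖ ^ 2 : ℝ) : ℂ)⁻¹ * (deriv f a * ((1 - ‖a‖ ^ 2 : ℝ) : ℂ))) 0 := by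
    have hinner := hfa.comp_of_eq 0 (hasDerivAt_moebius_neg_zero a) hzero.symm
    exact (hasDerivAt_moebius_self hb).comp_of_eq 0 hinner (by simp [hzero])
  have hle : ‖deriv F 0‖ ≤ 1 := Complex.norm_deriv_le_one_of_mapsTo_ball hFd
    (by rw [hF0]; exact hFm.mono_right ball_subset_closedBall) one_pos
  have hpa := one_sub_sq_pos_of_mem_ball ha
  have hpb := one_sub_sq_pos_of_mem_ball hb
  rw [hF'.deriv, norm_mul, norm_mul, norm_inv, norm_real, norm_real,
    Real.norm_of_nonneg hpa.le, Real.norm_of_nonneg hpb.le, inv_mul_le_iff₀ hpb, mul_one] at hle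
  exact hle

lemma differentiableOn_of_eqOn_dilatation {s : Set ℂ} (hs : IsOpen s) {h g ω : ℂ → ℂ}
    (hh : DifferentiableOn ℂ h s) (hh' : DifferentiableOn ℂ (deriv h) s)
    (hg : DifferentiableOn ℂ g s) (hne : ∀ z ∈ s, deriv h z * g z ≠ 0)
    (hω : ∀ z ∈ s, ω z = deriv g z * h z / (g z * deriv h z)) :
    DifferentiableOn ℂ ω s := by
  have hg' : DifferentiableOn ℂ (deriv g) s := (hg.analyticOnNhd hs).deriv.differentiableOn
  refine DifferentiableOn.congr (fun z hz => ?_) hω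
  exact ((hg'.mul hh).div (hg.mul hh') fun z hz => by rw [Pi.mul_apply, mul_comm]; exact hne z hz) z hz

lemma preSch_eq_of_deriv_eq_mul {h g ψ : ℂ → ℂ} {z : ℂ}
    (hψ : deriv ψ =ᶠ[𝓝 z] fun w => deriv h w * g w)
    (hh' : DifferentiableAt ℂ (deriv h) z) (hg : DifferentiableAt ℂ g z)
    (hne : deriv h z * g z ≠ 0) :
    preSch ψ z = deriv (deriv h) z / deriv h z + deriv g z / g z := by
  have hψ'' : deriv (deriv ψ) z = deriv (deriv h) z * g z + deriv h z * deriv g z := by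
    rw [hψ.deriv_eq]; exact (hh'.hasDerivAt.mul hg.hasDerivAt).deriv
  have hh0 : deriv h z ≠ 0 := left_ne_zero_of_mul hne
  have hg0 : g z ≠ 0 := right_ne_zero_of_mul hne
  rw [preSch, hψ'', hψ.eq_of_nhds]
  field_simp

lemma one_sub_sq_mul_norm_conj_mul_deriv_div_le {ω : ℂ → ℂ}
    (hd : DifferentiableOn ℂ ω (ball 0 1)) (hm : MapsTo ω (ball 0 1) (ball 0 1))
    {z : ℂ} (hz : z ∈ ball (0 : ℂ) 1) :
    (1 - ‖z‖ ^ 2) * ‖conj (ω z) * deriv ω z / ((1 - ‖ω z‖ ^ 2 : ℝ) : ℂ)‖ ≤ ‖ω z‖ := by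
  have hpω := one_sub_sq_pos_of_mem_ball (hm hz)
  have hpick := norm_deriv_mul_one_sub_sq_le_of_mapsTo_ball hd hm hz
  rw [norm_div, norm_mul, RCLike.norm_conj, norm_real, Real.norm_of_nonneg hpω.le, mul_div_assoc',
    div_le_iff₀ hpω]
  calc (1 - ‖z‖ ^ 2) * (‖ω z‖ * ‖deriv ω z‖) = ‖ω z‖ * (‖deriv ω z‖ * (1 - ‖z‖ ^ 2)) := by ring
    _ ≤ ‖ω z‖ * (1 - ‖ω z‖ ^ 2) := mul_le_mul_of_nonneg_left hpick (norm_nonneg _)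

section CloseFunctions

variable {α : Type*} {s : Set α} {u v : α → ℝ} {c : ℝ}

lemma BddAbove.image_of_le_add (hv : BddAbove (v '' s)) (h : ∀ x ∈ s, u x ≤ v x + c) :
    BddAbove (u '' s) := by
  obtain ⟨M, hM⟩ := hv
  refine ⟨M + c, forall_mem_image.mpr fun x hx => ?_⟩
  linarith [h x hx, hM (mem_image_of_mem v hx)]

lemma csSup_image_le_csSup_image_add (hs : s.Nonempty) (hv : BddAbove (v '' s))
    (h : ∀ x ∈ s, u x ≤ v x + c) : sSup (u '' s) ≤ sSup (v '' s) + c :=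
  csSup_le (hs.image u) <| forall_mem_image.mpr fun x hx =>
    (h x hx).trans (add_le_add_left (le_csSup hv (mem_image_of_mem v hx)) c)

lemma bddAbove_image_iff_of_abs_sub_le (h : ∀ x ∈ s, |u x - v x| ≤ c) :
    BddAbove (u '' s) ↔ BddAbove (v '' s) :=
  ⟨fun hu => hu.image_of_le_add fun x hx => by linarith [abs_sub_le_iff.mp (h x hx)],
    fun hv => hv.image_of_le_add fun x hx => by linarith [abs_sub_le_iff.mp (h x hx)]⟩

lemma abs_csSup_image_sub_csSup_image_le (hs : s.Nonempty) (h : ∀ x ∈ s, |u x - v x| ≤ c)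
    (hu : BddAbove (u '' s)) : |sSup (u '' s) - sSup (v '' s)| ≤ c := by
  have hv := (bddAbove_image_iff_of_abs_sub_le h).mp hu
  have huv := csSup_image_le_csSup_image_add (u := u) hs hv fun x hx => by
    linarith [abs_sub_le_iff.mp (h x hx)]
  have hvu := csSup_image_le_csSup_image_add (u := v) (c := c) hs hu fun x hx => by
    linarith [abs_sub_le_iff.mp (h x hx)]
  exact abs_sub_le_iff.mpr ⟨by linarith, by linarith⟩

end CloseFunctions

lemma normSet_eq_image (P : ℂ → ℂ) :
    normSet P = (fun z => (1 - ‖z‖ ^ 2) * ‖P z‖) '' unitDisk := by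
  ext r; simp [normSet, eq_comm]

theorem logharmonic_preSchwarzian_vs_psi_general (h g ψ ω : ℂ → ℂ)
    (hh : DifferentiableOn ℂ h unitDisk) (hh' : DifferentiableOn ℂ (deriv h) unitDisk)
    (hg : DifferentiableOn ℂ g unitDisk)
    (hne : ∀ z ∈ unitDisk, deriv h z * g z ≠ 0)
    (hωdef : ∀ z ∈ unitDisk, ω z = deriv g z * h z / (g z * deriv h z))
    (hωmap : ∀ z ∈ unitDisk, ω z ∈ unitDisk)
    (hψeq : ∀ z ∈ unitDisk, deriv ψ z = deriv h z * g z) :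
    (BddAbove (normSet (logPreSch h g ω)) ↔ BddAbove (normSet (preSch ψ))) ∧
      (BddAbove (normSet (logPreSch h g ω)) →
        |sSup (normSet (logPreSch h g ω)) - sSup (normSet (preSch ψ))| ≤ 1) := by
  have hD : IsOpen unitDisk := isOpen_ball
  have hω := differentiableOn_of_eqOn_dilatation hD hh hh' hg hne hωdef
  have hclose : ∀ z ∈ unitDisk,
      |(1 - ‖z‖ ^ 2) * ‖logPreSch h g ω z‖ - (1 - ‖z‖ ^ 2) * ‖preSch ψ z‖| ≤ 1 := by
    intro z hz
    have hzn := hD.mem_nhds hz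
    have hweight := (one_sub_sq_pos_of_mem_ball hz).le
    have hpre := preSch_eq_of_deriv_eq_mul (Filter.eventuallyEq_of_mem hzn hψeq)
      (hh'.differentiableAt hzn) (hg.differentiableAt hzn) (hne z hz)
    have hsub : logPreSch h g ω z - preSch ψ z
        = -(conj (ω z) * deriv ω z / ((1 - ‖ω z‖ ^ 2 : ℝ) : ℂ)) := by
      rw [logPreSch, hpre]; ring
    calc |(1 - ‖z‖ ^ 2) * ‖logPreSch h g ω z‖ - (1 - ‖z‖ ^ 2) * ‖preSch ψ z‖|
        ≤ (1 - ‖z‖ ^ 2) * ‖logPreSch h g ω z - preSch ψ z‖ := by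
          rw [← mul_sub, abs_mul, abs_of_nonneg hweight]
          exact mul_le_mul_of_nonneg_left (abs_norm_sub_norm_le _ _) hweight
      _ ≤ ‖ω z‖ := by
          rw [hsub, norm_neg]; exact one_sub_sq_mul_norm_conj_mul_deriv_div_le hω hωmap hz
      _ ≤ 1 := (mem_ball_zero_iff.mp (hωmap z hz)).le
  rw [normSet_eq_image, normSet_eq_image]
  exact ⟨bddAbove_image_iff_of_abs_sub_le hclose,
    abs_csSup_image_sub_csSup_image_le ⟨0, mem_ball_self one_pos⟩ hclose⟩

/-- Theorem 1: for a sense-preserving logharmonic mapping `f = h ⬝ conj g` with dilatation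
`ω = g'h/(gh')` and `ψ` analytic with `ψ' = h'g`, the norms `‖P_f‖` and `‖P_ψ‖` are
simultaneously finite, and if finite `| ‖P_f‖ − ‖P_ψ‖ | ≤ 1`. -/
theorem logharmonic_preSchwarzian_vs_psi (h g ψ ω : ℂ → ℂ)
    (hh : DifferentiableOn ℂ h unitDisk) (hh' : DifferentiableOn ℂ (deriv h) unitDisk)
    (hg : DifferentiableOn ℂ g unitDisk)
    (hψ : DifferentiableOn ℂ ψ unitDisk) (hψ' : DifferentiableOn ℂ (deriv ψ) unitDisk)
    (hne : ∀ z ∈ unitDisk, deriv h z * g z ≠ 0)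
    (hωdef : ∀ z ∈ unitDisk, ω z = deriv g z * h z / (g z * deriv h z))
    (hωmap : ∀ z ∈ unitDisk, ω z ∈ unitDisk)
    (hψeq : ∀ z ∈ unitDisk, deriv ψ z = deriv h z * g z) :
    (BddAbove (normSet (logPreSch h g ω)) ↔ BddAbove (normSet (preSch ψ))) ∧
      (BddAbove (normSet (logPreSch h g ω)) →
        |sSup (normSet (logPreSch h g ω)) - sSup (normSet (preSch ψ))| ≤ 1) :=
  logharmonic_preSchwarzian_vs_psi_general h g ψ ω hh hh' hg hne hωdef hωmap hψeq
end

section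
/- For h(z) = 1/(1−z) on 𝔻, the pre-Schwarzian norm satisfies sup_{z∈𝔻}(1−|z|²)·|(2+z)/(1−z)| = 6. -/
open Complex Metric Set

/-- The pre-Schwarzian norm of `ψ` with `P_ψ(z) = (2+z)/(1−z)` equals `6`. -/
theorem preSchwarzian_norm_eq_six :
    sSup {r | ∃ z ∈ unitDisk, r = (1 - ‖z‖ ^ 2) * ‖(2 + z) / (1 - z)‖} = 6 := by
  apply IsLUB.csSup_eq
  · constructor
    · rintro r ⟨z, hz, rfl⟩
      have ha : ‖z‖ < 1 := by simpa [unitDisk] using mem_ball_zero_iff.mp hz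
      have ha0 : (0:ℝ) ≤ ‖z‖ := norm_nonneg z
      set a := ‖z‖ with haa
      have h1 : ‖(2:ℂ) + z‖ ≤ 2 + a := by
        have h2n : ‖(2:ℂ)‖ = 2 := by
          rw [show (2:ℂ) = ((2:ℝ):ℂ) by norm_num, Complex.norm_real]
          norm_num
        calc ‖(2:ℂ) + z‖ ≤ ‖(2:ℂ)‖ + ‖z‖ := norm_add_le _ _
        _ = 2 + a := by rw [h2n]
      have h2 : 1 - a ≤ ‖(1:ℂ) - z‖ := by
        have := norm_sub_norm_le (1:ℂ) z
        simpa using this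
      have h2pos : (0:ℝ) < 1 - a := by linarith
      have key : ‖((2:ℂ) + z) / (1 - z)‖ ≤ (2 + a) / (1 - a) := by
        rw [norm_div]
        exact div_le_div₀ (by linarith) h1 h2pos h2
      have hm : (0:ℝ) ≤ 1 - a ^ 2 := by nlinarith
      have step : (1 - a ^ 2) * ‖((2:ℂ) + z) / (1 - z)‖ ≤
          (1 - a ^ 2) * ((2 + a) / (1 - a)) :=
        mul_le_mul_of_nonneg_left key hm
      have heq : (1 - a ^ 2) * ((2 + a) / (1 - a)) = (1 + a) * (2 + a) := by
        field_simp
        ring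
      rw [heq] at step
      nlinarith
    · intro w hw
      by_contra h
      push_neg at h
      set t : ℝ := min (1/2) ((6 - w) / 6) with ht
      have ht0 : 0 < t := by
        apply lt_min
        · norm_num
        · linarith
      have ht1 : t ≤ 1/2 := min_le_left _ _
      have ht2 : t ≤ (6 - w) / 6 := min_le_right _ _
      set x : ℝ := 1 - t with hx
      have hx0 : (1:ℝ)/2 ≤ x := by simp [hx]; linarith
      have hx1 : x < 1 := by simp [hx]; linarith
      have hz : ((x:ℂ)) ∈ unitDisk := by
        simp only [unitDisk, mem_ball_zero_iff, Complex.norm_real, Real.norm_eq_abs]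
        rw [_root_.abs_of_nonneg (by linarith : (0:ℝ) ≤ x)]
        exact hx1
      have hmem : (1 - x ^ 2) * ((2 + x) / (1 - x)) ∈
          {r | ∃ z ∈ unitDisk, r = (1 - ‖z‖ ^ 2) * ‖(2 + z) / (1 - z)‖} := by
        refine ⟨(x:ℂ), hz, ?_⟩
        have e1 : ‖(x:ℂ)‖ = x := by
          rw [Complex.norm_real, Real.norm_of_nonneg (by linarith : (0:ℝ) ≤ x)]
        have e2 : ‖((2:ℂ) + (x:ℂ)) / (1 - (x:ℂ))‖ = (2 + x) / (1 - x) := by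
          rw [norm_div]
          have : ((2:ℂ) + (x:ℂ)) = ((2 + x : ℝ) : ℂ) := by push_cast; ring
          rw [this]
          have : ((1:ℂ) - (x:ℂ)) = ((1 - x : ℝ) : ℂ) := by push_cast; ring
          rw [this, Complex.norm_real, Complex.norm_real,
            Real.norm_of_nonneg (by linarith : (0:ℝ) ≤ 2 + x),
            Real.norm_of_nonneg (by linarith : (0:ℝ) ≤ 1 - x)]
        rw [e1, e2]
      have hle : (1 - x ^ 2) * ((2 + x) / (1 - x)) ≤ w := hw hmem
      have heq : (1 - x ^ 2) * ((2 + x) / (1 - x)) = (1 + x) * (2 + x) := by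
        have : (1:ℝ) - x ≠ 0 := by linarith
        field_simp
        ring
      rw [heq] at hle
      nlinarith
  · exact ⟨2, 0, by simp [unitDisk], by norm_num⟩
end

section
/- For z ∈ 𝔻 define P(z) = (2+z)/(1−z) − z̄/(1−|z|²). Then sup_{z∈𝔻}(1−|z|²)|P(z)| = 5. -/
/-!
Write `z = x + iy` and `t = |z|`. Clearing denominators,
`(1 - t²)(1 - z) P(z) = (2 - t²(1 + x)) + i y (2 - t²)`, and comparing squared moduli gives
`(t² + 2t + 2)² |1 - z|² - |(1 - t²)(1 - z) P(z)|² = 4(1 + t)(t - x)((1 + t²)(t + 2) - (1 - t)x) ≥ 0`.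
So on the circle `|z| = t` the weighted norm `(1 - t²)|P(z)|` is largest at `z = t`, where it equals
`t² + 2t + 2`; this increases to `5` as `t → 1`.
-/

open Complex Metric Set

noncomputable def preSchwarzian (z : ℂ) : ℂ :=
  (2 + z) / (1 - z) - starRingEnd ℂ z / ((1 - ‖z‖ ^ 2 : ℝ) : ℂ)

theorem preSchwarzian_numerator_sq_le {x y t : ℝ} (ht : x ^ 2 + y ^ 2 = t ^ 2) (ht0 : 0 ≤ t) :
    (2 - t ^ 2 * (1 + x)) ^ 2 + (y * (2 - t ^ 2)) ^ 2
      ≤ (t ^ 2 + 2 * t + 2) ^ 2 * ((1 - x) ^ 2 + y ^ 2) := by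
  obtain ⟨hnegt, hxt⟩ := abs_le_of_sq_le_sq' (by nlinarith : x ^ 2 ≤ t ^ 2) ht0
  have hfactor : 0 ≤ (1 + t ^ 2) * (t + 2) - (1 - t) * x := by nlinarith
  have key : (t ^ 2 + 2 * t + 2) ^ 2 * ((1 - x) ^ 2 + y ^ 2)
      - ((2 - t ^ 2 * (1 + x)) ^ 2 + (y * (2 - t ^ 2)) ^ 2)
      = 4 * (1 + t) * (t - x) * ((1 + t ^ 2) * (t + 2) - (1 - t) * x) := by
    linear_combination (-(2 - t ^ 2) ^ 2 + (t ^ 2 + 2 * t + 2) ^ 2) * ht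
  rw [← sub_nonneg, key]
  exact mul_nonneg (mul_nonneg (by positivity) (sub_nonneg.2 hxt)) hfactor

theorem preSchwarzian_mul_eq {z : ℂ} (hz : ‖z‖ < 1) :
    ((1 - ‖z‖ ^ 2 : ℝ) : ℂ) * preSchwarzian z * (1 - z)
      = ⟨2 - ‖z‖ ^ 2 * (1 + z.re), z.im * (2 - ‖z‖ ^ 2)⟩ := by
  have hz1 : (1 : ℂ) - z ≠ 0 := sub_ne_zero.2 fun h => by simp [← h] at hz
  have hw : ((1 - ‖z‖ ^ 2 : ℝ) : ℂ) ≠ 0 := by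
    exact_mod_cast (by nlinarith [norm_nonneg z] : (1 - ‖z‖ ^ 2 : ℝ) ≠ 0)
  have hclear : ((1 - ‖z‖ ^ 2 : ℝ) : ℂ) * preSchwarzian z * (1 - z)
      = ((1 - ‖z‖ ^ 2 : ℝ) : ℂ) * (2 + z) - starRingEnd ℂ z * (1 - z) := by
    rw [preSchwarzian]; field_simp
  have hsq : ‖z‖ ^ 2 = z.re ^ 2 + z.im ^ 2 := by rw [Complex.sq_norm, normSq_apply]; ring
  rw [hclear]
  apply Complex.ext
  · simp only [sub_re, add_re, mul_re, ofReal_re, ofReal_im, conj_re, conj_im, one_re, one_im,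
      sub_im, re_ofNat]
    linear_combination -hsq
  · simp only [sub_re, add_re, mul_im, ofReal_re, ofReal_im, conj_re, conj_im, one_re,
      one_im, sub_im, add_im, re_ofNat, im_ofNat]
    ring

theorem norm_preSchwarzian_numerator_le (z : ℂ) :
    ‖(⟨2 - ‖z‖ ^ 2 * (1 + z.re), z.im * (2 - ‖z‖ ^ 2)⟩ : ℂ)‖
      ≤ (‖z‖ ^ 2 + 2 * ‖z‖ + 2) * ‖1 - z‖ := by
  have hsq : z.re ^ 2 + z.im ^ 2 = ‖z‖ ^ 2 := by linarith [sq_norm_sub_sq_re z]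
  rw [← pow_le_pow_iff_left₀ (norm_nonneg _) (by positivity) two_ne_zero, mul_pow,
    Complex.sq_norm (1 - z), Complex.sq_norm ⟨_, _⟩, normSq_mk, normSq_apply]
  simpa only [sub_re, sub_im, one_re, one_im, zero_sub, neg_mul_neg, ← sq, neg_sq] using
    preSchwarzian_numerator_sq_le hsq (norm_nonneg z)

theorem one_sub_sq_mul_norm_preSchwarzian_mul {z : ℂ} (hz : ‖z‖ < 1) :
    (1 - ‖z‖ ^ 2) * ‖preSchwarzian z‖ * ‖1 - z‖
      = ‖(⟨2 - ‖z‖ ^ 2 * (1 + z.re), z.im * (2 - ‖z‖ ^ 2)⟩ : ℂ)‖ := by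
  have hw : 0 ≤ 1 - ‖z‖ ^ 2 := by nlinarith [norm_nonneg z]
  rw [← preSchwarzian_mul_eq hz, norm_mul, norm_mul, norm_real, Real.norm_of_nonneg hw]

theorem one_sub_sq_mul_norm_preSchwarzian_le {z : ℂ} (hz : ‖z‖ < 1) :
    (1 - ‖z‖ ^ 2) * ‖preSchwarzian z‖ ≤ ‖z‖ ^ 2 + 2 * ‖z‖ + 2 := by
  have hz1 : 0 < ‖1 - z‖ := norm_pos_iff.2 (sub_ne_zero.2 fun h => by simp [← h] at hz)
  refine le_of_mul_le_mul_right ?_ hz1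
  rw [one_sub_sq_mul_norm_preSchwarzian_mul hz]
  exact norm_preSchwarzian_numerator_le z

theorem one_sub_sq_mul_norm_preSchwarzian_ofReal {r : ℝ} (hr0 : 0 ≤ r) (hr1 : r < 1) :
    (1 - ‖(r : ℂ)‖ ^ 2) * ‖preSchwarzian r‖ = r ^ 2 + 2 * r + 2 := by
  have hr : ‖(r : ℂ)‖ = r := by rw [norm_real, Real.norm_of_nonneg hr0]
  have h := one_sub_sq_mul_norm_preSchwarzian_mul (z := r) (by rwa [hr])
  have hnum : (⟨2 - r ^ 2 * (1 + r), 0⟩ : ℂ) = ((1 - r) * (r ^ 2 + 2 * r + 2) : ℝ) := by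
    apply Complex.ext <;> simp only [ofReal_re, ofReal_im]; ring
  rw [hr, ofReal_re, ofReal_im, zero_mul, hnum, ← ofReal_one, ← ofReal_sub, norm_real, norm_real,
    Real.norm_of_nonneg (mul_nonneg (by linarith) (by positivity)),
    Real.norm_of_nonneg (by linarith)] at h
  rw [hr]
  exact mul_right_cancel₀ (sub_pos.2 hr1).ne' (h.trans (mul_comm _ _))

/-- For `P(z) = (2+z)/(1−z) − conj z/(1−|z|²)`, one has `sup (1−|z|²)|P(z)| = 5`. -/
theorem preSchwarzian_norm_eq_five :
    sSup {r | ∃ z ∈ unitDisk,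
        r = (1 - ‖z‖ ^ 2) *
          ‖(2 + z) / (1 - z) - (starRingEnd ℂ) z / ((1 - ‖z‖ ^ 2 : ℝ) : ℂ)‖} = 5 := by
  refine csSup_eq_of_forall_le_of_forall_lt_exists_gt ⟨_, 0, mem_ball_self one_pos, rfl⟩ ?_ ?_
  · rintro _ ⟨z, hz, rfl⟩
    have hz : ‖z‖ < 1 := mem_ball_zero_iff.1 hz
    calc _ ≤ ‖z‖ ^ 2 + 2 * ‖z‖ + 2 := one_sub_sq_mul_norm_preSchwarzian_le hz
      _ ≤ 5 := by nlinarith [norm_nonneg z]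
  · intro w hw
    obtain ⟨m, hwm, hm0, hm5⟩ : ∃ m, w ≤ m ∧ 0 ≤ m ∧ m < 5 :=
      ⟨max w 0, le_max_left w 0, le_max_right w 0, max_lt hw (by norm_num)⟩
    have hr0 : 0 ≤ m / 5 := by positivity
    have hr1 : m / 5 < 1 := by linarith
    refine ⟨_, ⟨(m / 5 : ℝ), mem_ball_zero_iff.2 (by rwa [norm_real, Real.norm_of_nonneg hr0]),
      rfl⟩, ?_⟩
    calc w < (m / 5) ^ 2 + 2 * (m / 5) + 2 := by
          nlinarith [mul_pos (sub_pos.2 hm5) (by linarith : (0 : ℝ) < 10 - m)]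
      _ = _ := (one_sub_sq_mul_norm_preSchwarzian_ofReal hr0 hr1).symm
end
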